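/- Fix Θ ∈ (0, π). Then the inner angles ϑ₁, ϑ₂ are smooth functions of (r₁, r₂) on the open positive quadrant, and sinh r₂ · ∂ϑ₁/∂r₂ = sinh r₁ · ∂ϑ₂/∂r₁. -/

import Mathlib

/-- The inverse hyperbolic cosine: `arcosh x = log (x + √(x² − 1))` for `x ≥ 1`. -/
noncomputable def arcosh (x : ℝ) : ℝ := Real.log (x + Real.sqrt (x ^ 2 - 1))

/-- The hyperbolic distance between the centers of two hyperbolic disks of radii `r₁`, `r₂`
meeting at exterior intersection angle `Θ` (hyperbolic cosine law). -/
noncomputable def dist2 (Θ r₁ r₂ : ℝ) : ℝ :=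
  arcosh (Real.cosh r₁ * Real.cosh r₂ + Real.cos Θ * Real.sinh r₁ * Real.sinh r₂)

/-- The inner angle `ϑ₁` at the first center of the hyperbolic triangle with side
lengths `r₁`, `r₂`, `d` (hyperbolic law of cosines). -/
noncomputable def theta2₁ (Θ r₁ r₂ : ℝ) : ℝ :=
  Real.arccos ((Real.cosh r₁ * Real.cosh (dist2 Θ r₁ r₂) - Real.cosh r₂) /
    (Real.sinh r₁ * Real.sinh (dist2 Θ r₁ r₂)))

/-- The inner angle `ϑ₂` at the second center of the hyperbolic triangle with side
lengths `r₁`, `r₂`, `d` (hyperbolic law of cosines). -/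
noncomputable def theta2₂ (Θ r₁ r₂ : ℝ) : ℝ :=
  Real.arccos ((Real.cosh r₂ * Real.cosh (dist2 Θ r₁ r₂) - Real.cosh r₁) /
    (Real.sinh r₂ * Real.sinh (dist2 Θ r₁ r₂)))

open Real

lemma arcosh_pos_arg {x : ℝ} (hx : 1 < x) : 0 < x + Real.sqrt (x ^ 2 - 1) := by
  have := Real.sqrt_nonneg (x ^ 2 - 1); linarith

lemma arcosh_inv_aux {x : ℝ} (hx : 1 < x) :
    (x + Real.sqrt (x ^ 2 - 1))⁻¹ = x - Real.sqrt (x ^ 2 - 1) := by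
  have hs : Real.sqrt (x ^ 2 - 1) ^ 2 = x ^ 2 - 1 := Real.sq_sqrt (by nlinarith)
  exact inv_eq_of_mul_eq_one_right (by nlinarith)

lemma cosh_arcosh {x : ℝ} (hx : 1 < x) : Real.cosh (_root_.arcosh x) = x := by
  rw [_root_.arcosh, Real.cosh_log (arcosh_pos_arg hx), arcosh_inv_aux hx]; ring

lemma sinh_arcosh {x : ℝ} (hx : 1 < x) : Real.sinh (_root_.arcosh x) = Real.sqrt (x ^ 2 - 1) := by
  rw [_root_.arcosh, Real.sinh_log (arcosh_pos_arg hx), arcosh_inv_aux hx]; ring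

lemma arccos_div_sqrt {A u : ℝ} (hu : 0 < u) :
    Real.arccos (A / Real.sqrt (A ^ 2 + u ^ 2)) = Real.pi / 2 - Real.arctan (A / u) := by
  rw [Real.arccos_eq_pi_div_two_sub_arcsin, Real.arctan_eq_arcsin]
  congr 2
  have h1 : (1 : ℝ) + (A / u) ^ 2 = (A ^ 2 + u ^ 2) / u ^ 2 := by field_simp; ring
  rw [h1, Real.sqrt_div (by positivity), Real.sqrt_sq hu.le]
  have hpos : 0 < Real.sqrt (A ^ 2 + u ^ 2) := by
    apply Real.sqrt_pos.2; positivity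
  field_simp

lemma neg_one_lt_cos' {Θ : ℝ} (hΘ : Θ ∈ Set.Ioo 0 Real.pi) : -1 < Real.cos Θ := by
  have hs : 0 < Real.sin Θ := Real.sin_pos_of_pos_of_lt_pi hΘ.1 hΘ.2
  nlinarith [Real.sin_sq_add_cos_sq Θ]

lemma C_gt_one {Θ r₁ r₂ : ℝ} (hΘ : Θ ∈ Set.Ioo 0 Real.pi) (h1 : 0 < r₁) (h2 : 0 < r₂) :
    1 < Real.cosh r₁ * Real.cosh r₂ + Real.cos Θ * Real.sinh r₁ * Real.sinh r₂ := by
  have hc := neg_one_lt_cos' hΘ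
  have hs1 := Real.sinh_pos_iff.2 h1
  have hs2 := Real.sinh_pos_iff.2 h2
  have hsub := Real.cosh_sub r₁ r₂
  have hone := Real.one_le_cosh (r₁ - r₂)
  nlinarith [mul_pos hs1 hs2]

lemma theta2₁_eq {Θ r₁ r₂ : ℝ} (hΘ : Θ ∈ Set.Ioo 0 Real.pi) (h1 : 0 < r₁) (h2 : 0 < r₂) :
    theta2₁ Θ r₁ r₂ = Real.pi / 2 -
      Real.arctan ((Real.sinh r₁ * Real.cosh r₂ + Real.cos Θ * Real.cosh r₁ * Real.sinh r₂) /
        (Real.sinh r₂ * Real.sin Θ)) := by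
  have hC := C_gt_one hΘ h1 h2
  set C := Real.cosh r₁ * Real.cosh r₂ + Real.cos Θ * Real.sinh r₁ * Real.sinh r₂ with hCdef
  have hs1 := Real.sinh_pos_iff.2 h1
  have hs2 := Real.sinh_pos_iff.2 h2
  have hk : 0 < Real.sin Θ := Real.sin_pos_of_pos_of_lt_pi hΘ.1 hΘ.2
  set A := Real.sinh r₁ * Real.cosh r₂ + Real.cos Θ * Real.cosh r₁ * Real.sinh r₂ with hAdef
  have hc1 := Real.cosh_sq r₁
  have hc2 := Real.cosh_sq r₂
  have hk2 : Real.sin Θ ^ 2 = 1 - Real.cos Θ ^ 2 := Real.sin_sq Θ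
  have hnum : Real.cosh r₁ * C - Real.cosh r₂ = Real.sinh r₁ * A := by
    rw [hCdef, hAdef]; linear_combination Real.cosh r₂ * hc1
  have hQ : C ^ 2 - 1 = A ^ 2 + (Real.sinh r₂ * Real.sin Θ) ^ 2 := by
    rw [hCdef, hAdef]
    linear_combination (Real.cosh r₂ ^ 2 - Real.cos Θ ^ 2 * Real.sinh r₂ ^ 2) * hc1 + hc2 -
      Real.sinh r₂ ^ 2 * hk2
  have hu : 0 < Real.sinh r₂ * Real.sin Θ := mul_pos hs2 hk
  rw [theta2₁, dist2, ← hCdef, cosh_arcosh hC, sinh_arcosh hC, hnum, hQ,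
    mul_div_mul_left _ _ hs1.ne']
  exact arccos_div_sqrt hu

lemma dist2_symm (Θ r₁ r₂ : ℝ) : dist2 Θ r₁ r₂ = dist2 Θ r₂ r₁ := by
  rw [dist2, dist2]; ring_nf

lemma theta2₂_eq_swap (Θ r₁ r₂ : ℝ) : theta2₂ Θ r₁ r₂ = theta2₁ Θ r₂ r₁ := by
  rw [theta2₂, theta2₁, dist2_symm Θ r₂ r₁]

lemma deriv_theta2₁ {Θ r₁ r₂ : ℝ} (hΘ : Θ ∈ Set.Ioo 0 Real.pi) (h1 : 0 < r₁) (h2 : 0 < r₂) :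
    deriv (fun t => theta2₁ Θ r₁ t) r₂ = Real.sinh r₁ * Real.sin Θ /
      ((Real.sinh r₁ * Real.cosh r₂ + Real.cos Θ * Real.cosh r₁ * Real.sinh r₂) ^ 2 +
        (Real.sinh r₂ * Real.sin Θ) ^ 2) := by
  have hk : 0 < Real.sin Θ := Real.sin_pos_of_pos_of_lt_pi hΘ.1 hΘ.2
  have hs1 := Real.sinh_pos_iff.2 h1
  have hs2 := Real.sinh_pos_iff.2 h2
  have heq : (fun t => theta2₁ Θ r₁ t) =ᶠ[nhds r₂]
      (fun t => Real.pi / 2 - Real.arctan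
        ((Real.sinh r₁ * Real.cosh t + Real.cos Θ * Real.cosh r₁ * Real.sinh t) /
          (Real.sinh t * Real.sin Θ))) := by
    filter_upwards [Ioi_mem_nhds h2] with t ht
    exact theta2₁_eq hΘ h1 ht
  rw [heq.deriv_eq]
  have hD0 : Real.sinh r₂ * Real.sin Θ ≠ 0 := (mul_pos hs2 hk).ne'
  have hN : HasDerivAt (fun t => Real.sinh r₁ * Real.cosh t + Real.cos Θ * Real.cosh r₁ * Real.sinh t)
      (Real.sinh r₁ * Real.sinh r₂ + Real.cos Θ * Real.cosh r₁ * Real.cosh r₂) r₂ :=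
    ((Real.hasDerivAt_cosh r₂).const_mul _).add ((Real.hasDerivAt_sinh r₂).const_mul _)
  have hDd : HasDerivAt (fun t => Real.sinh t * Real.sin Θ) (Real.cosh r₂ * Real.sin Θ) r₂ :=
    (Real.hasDerivAt_sinh r₂).mul_const _
  have hg : HasDerivAt (fun t =>
      (Real.sinh r₁ * Real.cosh t + Real.cos Θ * Real.cosh r₁ * Real.sinh t) /
        (Real.sinh t * Real.sin Θ))
      (-(Real.sinh r₁ / (Real.sin Θ * Real.sinh r₂ ^ 2))) r₂ := by
    refine (hN.div hDd hD0).congr_deriv (Eq.symm ?_)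
    have hc2 := Real.cosh_sq r₂
    have hs2' := hs2.ne'
    have hk' := hk.ne'
    field_simp
    linear_combination (Real.sinh r₁) * hc2
  have hfin := (hg.arctan).const_sub (Real.pi / 2)
  rw [hfin.deriv]
  have hden : 0 < (Real.sinh r₁ * Real.cosh r₂ + Real.cos Θ * Real.cosh r₁ * Real.sinh r₂) ^ 2 +
      (Real.sinh r₂ * Real.sin Θ) ^ 2 := by positivity
  field_simp
  ring


set_option maxHeartbeats 1000000 in
theorem two_circle_smooth_and_symmetric
    (Θ : ℝ) (hΘ : Θ ∈ Set.Ioo 0 Real.pi) :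
    ContDiffOn ℝ (⊤ : ℕ∞) (fun p : ℝ × ℝ => theta2₁ Θ p.1 p.2) {p : ℝ × ℝ | 0 < p.1 ∧ 0 < p.2} ∧
    ContDiffOn ℝ (⊤ : ℕ∞) (fun p : ℝ × ℝ => theta2₂ Θ p.1 p.2) {p : ℝ × ℝ | 0 < p.1 ∧ 0 < p.2} ∧
    (∀ r₁ r₂ : ℝ, 0 < r₁ → 0 < r₂ →
      Real.sinh r₂ * deriv (fun t => theta2₁ Θ r₁ t) r₂ =
        Real.sinh r₁ * deriv (fun t => theta2₂ Θ t r₂) r₁) := by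
  have hk : 0 < Real.sin Θ := Real.sin_pos_of_pos_of_lt_pi hΘ.1 hΘ.2
  have hsmooth : ∀ (f g : ℝ × ℝ → ℝ),
      (f = fun p : ℝ × ℝ => Real.sinh p.1) → (g = fun p : ℝ × ℝ => Real.sinh p.2) → True :=
    fun _ _ _ _ => trivial
  have smooth1 : ContDiffOn ℝ (⊤ : ℕ∞)
      (fun p : ℝ × ℝ => (Real.sinh p.1 * Real.cosh p.2 + Real.cos Θ * Real.cosh p.1 * Real.sinh p.2) /
        (Real.sinh p.2 * Real.sin Θ)) {p : ℝ × ℝ | 0 < p.1 ∧ 0 < p.2} := by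
    apply ContDiffOn.div
    · exact (((contDiff_fst.sinh).mul (contDiff_snd.cosh)).add
        ((contDiff_const.mul (contDiff_fst.cosh)).mul (contDiff_snd.sinh))).contDiffOn
    · exact ((contDiff_snd.sinh).mul contDiff_const).contDiffOn
    · intro p hp
      exact (mul_pos (Real.sinh_pos_iff.2 hp.2) hk).ne'
  have smooth2 : ContDiffOn ℝ (⊤ : ℕ∞)
      (fun p : ℝ × ℝ => (Real.sinh p.2 * Real.cosh p.1 + Real.cos Θ * Real.cosh p.2 * Real.sinh p.1) /
        (Real.sinh p.1 * Real.sin Θ)) {p : ℝ × ℝ | 0 < p.1 ∧ 0 < p.2} := by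
    apply ContDiffOn.div
    · exact (((contDiff_snd.sinh).mul (contDiff_fst.cosh)).add
        ((contDiff_const.mul (contDiff_snd.cosh)).mul (contDiff_fst.sinh))).contDiffOn
    · exact ((contDiff_fst.sinh).mul contDiff_const).contDiffOn
    · intro p hp
      exact (mul_pos (Real.sinh_pos_iff.2 hp.1) hk).ne'
  refine ⟨?_, ?_, ?_⟩
  · apply ContDiffOn.congr (contDiffOn_const.sub (Real.contDiff_arctan.comp_contDiffOn smooth1))
    intro p hp
    exact theta2₁_eq hΘ hp.1 hp.2
  · apply ContDiffOn.congr (contDiffOn_const.sub (Real.contDiff_arctan.comp_contDiffOn smooth2))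
    intro p hp
    rw [theta2₂_eq_swap]
    exact theta2₁_eq hΘ hp.2 hp.1
  · intro r₁ r₂ h1 h2
    have e2 : (fun t => theta2₂ Θ t r₂) = (fun t => theta2₁ Θ r₂ t) :=
      funext fun t => theta2₂_eq_swap Θ t r₂
    rw [e2, deriv_theta2₁ hΘ h1 h2, deriv_theta2₁ hΘ h2 h1]
    have hc1 := Real.cosh_sq r₁
    have hc2 := Real.cosh_sq r₂
    have hk2 : Real.sin Θ ^ 2 = 1 - Real.cos Θ ^ 2 := Real.sin_sq Θ
    have hden : (Real.sinh r₁ * Real.cosh r₂ + Real.cos Θ * Real.cosh r₁ * Real.sinh r₂) ^ 2 +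
        (Real.sinh r₂ * Real.sin Θ) ^ 2 =
        (Real.sinh r₂ * Real.cosh r₁ + Real.cos Θ * Real.cosh r₂ * Real.sinh r₁) ^ 2 +
        (Real.sinh r₁ * Real.sin Θ) ^ 2 := by
      linear_combination (Real.cos Θ ^ 2 * Real.sinh r₂ ^ 2 - Real.sinh r₂ ^ 2) * hc1 +
        (Real.sinh r₁ ^ 2 - Real.cos Θ ^ 2 * Real.sinh r₁ ^ 2) * hc2 +
        (Real.sinh r₂ ^ 2 - Real.sinh r₁ ^ 2) * hk2
    rw [hden]
    ring
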